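/- arXiv:2207.03114 — 2 statements merged into one kernel-verified Lean document; each statement's English description precedes it below -/
import Mathlib

section
/- Let φ₁ : [0,∞) → [0,∞) be convex and strictly increasing with φ₁(0) = 0 and φ₁(1) = 1, and let φ₂ : [0,∞) → [0,∞) be convex and monotone increasing with φ₂(0) = 0. Fix a > 0 and b ≥ 0, and for each ε ≥ 0 let λ(ε) be the unique positive solution of φ₁(a/λ) + ε·φ₂(b/λ) = 1 (so λ(0) = a). Then the left derivative (φ₁)'_l(1) = lim_{s→1⁻} (φ₁(1) − φ₁(s))/(1 − s) exists, is positive, and lim_{ε→0⁺} (λ(ε) − a)/ε = a·φ₂(b/a)/(φ₁)'_l(1). (This is the scalar, pointwise form of Lemma 6.2 of the paper: with a = u_K(x) and b = u_L(x) it gives lim_{ε→0⁺}(u_{K+_{φ,ε}L}(x) − u_K(x))/ε = (u_K(x)/(φ₁)'_l(1))·φ₂(u_L(x)/u_K(x)).) -/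
/-!
Convexity of `φ₁` together with `φ₁ 0 = 0`, `φ₁ 1 = 1` gives `φ₁ s ≤ s` on `[0, 1]` and
`s ≤ φ₁ s` on `[1, ∞)`. Hence `a ≤ λ(ε)` and `1 - ε φ₂(b/a) ≤ a/λ(ε) ≤ 1`, so `a/λ(ε) → 1⁻`.
With `s = a/λ(ε)` the defining equation becomes `G(s) (λ(ε) - a) = ε λ(ε) φ₂(b/λ(ε))`, where `G` is
the slope of `φ₁` at `1`, given the value `d = (φ₁)'_l(1) ≥ 1` at `1` itself: this makes `G`
continuous from the left at `1` and keeps the identity true when `λ(ε) = a`. Dividing by `ε G(s)`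
and using continuity of `φ₂` at `b/a`, the quotient tends to `a φ₂(b/a)/d`.
-/

open Filter Topology Set

section LeftSlope

variable {f : ℝ → ℝ} {x d : ℝ}

lemma continuousWithinAt_update_slope (hf : HasDerivWithinAt f d (Iio x) x) :
    ContinuousWithinAt (Function.update (slope f x) x d) (Iic x) x := by
  rw [continuousWithinAt_update_same, Iic_sdiff_right]
  exact (hasDerivWithinAt_iff_tendsto_slope' self_notMem_Iio).mp hf

lemma update_slope_mul_sub (y : ℝ) :
    Function.update (slope f x) x d y * (y - x) = f y - f x := by
  rcases eq_or_ne y x with rfl | hy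
  · simp
  · rw [Function.update_of_ne hy, mul_comm, ← smul_eq_mul, sub_smul_slope, vsub_eq_sub]

end LeftSlope

namespace ConvexOn

variable {φ : ℝ → ℝ}

lemma le_self_of_mem_Icc (hφ : ConvexOn ℝ (Ici 0) φ) (h0 : φ 0 = 0) (h1 : φ 1 = 1)
    {s : ℝ} (hs : s ∈ Icc (0 : ℝ) 1) : φ s ≤ s := by
  have h := hφ.2 (x := 1) (y := 0) (by simp) (by simp) hs.1 (sub_nonneg.2 hs.2) (by ring)
  simpa [h0, h1] using h

lemma self_le_of_one_le (hφ : ConvexOn ℝ (Ici 0) φ) (h0 : φ 0 = 0) (h1 : φ 1 = 1)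
    {s : ℝ} (hs : 1 ≤ s) : s ≤ φ s := by
  have hs0 : 0 < s := one_pos.trans_le hs
  have h := hφ.2 (x := s) (y := 0) hs0.le self_mem_Ici (inv_nonneg.2 hs0.le)
    (sub_nonneg.2 (inv_le_one_of_one_le₀ hs)) (by ring)
  rw [smul_eq_mul, inv_mul_cancel₀ hs0.ne', smul_zero, add_zero, h1, h0, smul_zero, add_zero,
    smul_eq_mul, ← div_eq_inv_mul, one_le_div hs0] at h
  exact h

lemma one_le_leftDeriv_one (hφ : ConvexOn ℝ (Ici 0) φ) (h0 : φ 0 = 0) (h1 : φ 1 = 1) :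
    1 ≤ derivWithin φ (Iio 1) 1 := by
  have h := hφ.slope_le_leftDeriv_of_mem_interior (x := 0) (y := 1) (by simp)
    (by simp) one_pos
  simpa [slope_def_field, h0, h1] using h

end ConvexOn

lemma ConvexOn.tendsto_comp_div {α : Type*} {φ : ℝ → ℝ} (hφ : ConvexOn ℝ (Ici 0) φ)
    {a b : ℝ} (ha : 0 < a) (hb : 0 ≤ b) {L : Filter α} {l : α → ℝ} (hl : Tendsto l L (𝓝 a)) :
    Tendsto (fun x => φ (b / l x)) L (𝓝 (φ (b / a))) := by
  rcases hb.eq_or_lt with rfl | hb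
  · simp only [zero_div, tendsto_const_nhds]
  · have hc : ContinuousAt φ (b / a) := hφ.continuousOn_interior.continuousAt
      (isOpen_interior.mem_nhds (by simpa using div_pos hb ha))
    exact hc.tendsto.comp (tendsto_const_nhds.div hl ha.ne')

section OrliczSolution

variable {φ₁ φ₂ : ℝ → ℝ} {a b : ℝ}

lemma le_of_orlicz_eq (hφ₁ : ConvexOn ℝ (Ici 0) φ₁) (h0 : φ₁ 0 = 0) (h1 : φ₁ 1 = 1)
    (hφ₂ : ∀ s ∈ Ici (0 : ℝ), 0 ≤ φ₂ s) (hb : 0 ≤ b) {ε r : ℝ} (hε : 0 ≤ ε) (hr : 0 < r)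
    (h : φ₁ (a / r) + ε * φ₂ (b / r) = 1) : a ≤ r := by
  by_contra! hra
  have hgt : 1 < a / r := (one_lt_div hr).2 hra
  have hφ₁ar := hφ₁.self_le_of_one_le h0 h1 hgt.le
  have hε_term := mul_nonneg hε (hφ₂ _ (div_nonneg hb hr.le))
  linarith

lemma sub_div_eq_of_orlicz_eq {G : ℝ → ℝ} (hG : ∀ s, G s * (s - 1) = φ₁ s - φ₁ 1)
    (h1 : φ₁ 1 = 1) {ε r : ℝ} (hε : ε ≠ 0) (hr : r ≠ 0) (hGr : G (a / r) ≠ 0)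
    (h : φ₁ (a / r) + ε * φ₂ (b / r) = 1) :
    (r - a) / ε = r * φ₂ (b / r) / G (a / r) := by
  have hra : r * (a / r) = a := mul_div_cancel₀ a hr
  rw [div_eq_div_iff hε hGr]
  linear_combination -r * hG (a / r) - r * h + G (a / r) * hra + r * h1

variable {l : ℝ → ℝ}

lemma tendsto_div_orlicz_solution (hφ₁ : ConvexOn ℝ (Ici 0) φ₁) (h0 : φ₁ 0 = 0)
    (h1 : φ₁ 1 = 1) (hφ₂mono : MonotoneOn φ₂ (Ici 0)) (hφ₂ : ∀ s ∈ Ici (0 : ℝ), 0 ≤ φ₂ s)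
    (ha : 0 < a) (hb : 0 ≤ b)
    (hl : ∀ ε : ℝ, 0 ≤ ε → 0 < l ε ∧ φ₁ (a / l ε) + ε * φ₂ (b / l ε) = 1) :
    Tendsto (fun ε => a / l ε) (𝓝[>] 0) (𝓝[≤] 1) := by
  have hal : ∀ ε, 0 ≤ ε → a ≤ l ε := fun ε hε =>
    le_of_orlicz_eq hφ₁ h0 h1 hφ₂ hb hε (hl ε hε).1 (hl ε hε).2
  have hle : ∀ ε, 0 ≤ ε → a / l ε ≤ 1 := fun ε hε => (div_le_one (hl ε hε).1).2 (hal ε hε)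
  have hlower : ∀ ε, 0 ≤ ε → 1 - ε * φ₂ (b / a) ≤ a / l ε := by
    intro ε hε
    obtain ⟨hpos, heq⟩ := hl ε hε
    have hφ₂le : φ₂ (b / l ε) ≤ φ₂ (b / a) := hφ₂mono (div_nonneg hb hpos.le)
      (div_nonneg hb ha.le) (div_le_div_of_nonneg_left hb ha (hal ε hε))
    have := hφ₁.le_self_of_mem_Icc h0 h1 ⟨div_nonneg ha.le hpos.le, hle ε hε⟩
    linarith [mul_le_mul_of_nonneg_left hφ₂le hε]
  have hlower_tendsto : Tendsto (fun ε : ℝ => 1 - ε * φ₂ (b / a)) (𝓝[>] 0) (𝓝 1) := by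
    have h : Tendsto (fun ε : ℝ => 1 - ε * φ₂ (b / a)) (𝓝 0) (𝓝 (1 - 0 * φ₂ (b / a))) :=
      (continuous_const.sub (continuous_id.mul continuous_const)).tendsto 0
    rw [zero_mul, sub_zero] at h
    exact h.mono_left nhdsWithin_le_nhds
  refine tendsto_nhdsWithin_iff.2 ⟨tendsto_of_tendsto_of_tendsto_of_le_of_le' hlower_tendsto
    tendsto_const_nhds ?_ ?_, ?_⟩ <;>
  filter_upwards [self_mem_nhdsWithin] with ε (hε : 0 < ε)
  exacts [hlower ε hε.le, hle ε hε.le, hle ε hε.le]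

lemma tendsto_orlicz_solution (hφ₁ : ConvexOn ℝ (Ici 0) φ₁) (h0 : φ₁ 0 = 0)
    (h1 : φ₁ 1 = 1) (hφ₂mono : MonotoneOn φ₂ (Ici 0)) (hφ₂ : ∀ s ∈ Ici (0 : ℝ), 0 ≤ φ₂ s)
    (ha : 0 < a) (hb : 0 ≤ b)
    (hl : ∀ ε : ℝ, 0 ≤ ε → 0 < l ε ∧ φ₁ (a / l ε) + ε * φ₂ (b / l ε) = 1) :
    Tendsto l (𝓝[>] 0) (𝓝 a) := by
  have h := (tendsto_const_nhds (x := a)).div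
    ((tendsto_div_orlicz_solution hφ₁ h0 h1 hφ₂mono hφ₂ ha hb hl).mono_right nhdsWithin_le_nhds)
    one_ne_zero
  rw [div_one] at h
  refine h.congr' ?_
  filter_upwards [self_mem_nhdsWithin] with ε (hε : 0 < ε)
  exact div_div_cancel₀ ha.ne'

end OrliczSolution

theorem orlicz_combination_variation_general (φ₁ φ₂ : ℝ → ℝ)
    (hφ₁conv : ConvexOn ℝ (Set.Ici (0 : ℝ)) φ₁)
    (hφ₁0 : φ₁ 0 = 0) (hφ₁1 : φ₁ 1 = 1)
    (hφ₂conv : ConvexOn ℝ (Set.Ici (0 : ℝ)) φ₂)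
    (hφ₂mono : MonotoneOn φ₂ (Set.Ici (0 : ℝ)))
    (hφ₂nonneg : ∀ s ∈ Set.Ici (0 : ℝ), 0 ≤ φ₂ s)
    (a b : ℝ) (ha : 0 < a) (hb : 0 ≤ b)
    (l : ℝ → ℝ)
    (hl : ∀ ε : ℝ, 0 ≤ ε → 0 < l ε ∧ φ₁ (a / l ε) + ε * φ₂ (b / l ε) = 1) :
    ∃ d : ℝ, 0 < d ∧
      Tendsto (fun s : ℝ => (φ₁ 1 - φ₁ s) / (1 - s)) (𝓝[<] (1 : ℝ)) (𝓝 d) ∧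
      Tendsto (fun ε : ℝ => (l ε - a) / ε) (𝓝[>] (0 : ℝ))
        (𝓝 (a * φ₂ (b / a) / d)) := by
  set d := derivWithin φ₁ (Iio 1) 1
  have hderiv : HasDerivWithinAt φ₁ d (Iio 1) 1 :=
    hφ₁conv.hasDerivWithinAt_leftDeriv_of_mem_interior (by simp)
  have hd : 0 < d := one_pos.trans_le (hφ₁conv.one_le_leftDeriv_one hφ₁0 hφ₁1)
  refine ⟨d, hd, ?_, ?_⟩
  · convert (hasDerivWithinAt_iff_tendsto_slope' self_notMem_Iio).mp hderiv using 2 with s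
    rw [slope_comm, slope_def_field]
  set G := Function.update (slope φ₁ 1) 1 d
  have hG : Tendsto (fun ε => G (a / l ε)) (𝓝[>] 0) (𝓝 d) := by
    have h := (continuousWithinAt_update_slope hderiv).tendsto.comp
      (tendsto_div_orlicz_solution hφ₁conv hφ₁0 hφ₁1 hφ₂mono hφ₂nonneg ha hb hl)
    rw [Function.update_self] at h
    exact h
  have hl_tendsto := tendsto_orlicz_solution hφ₁conv hφ₁0 hφ₁1 hφ₂mono hφ₂nonneg ha hb hl
  refine ((hl_tendsto.mul (hφ₂conv.tendsto_comp_div ha hb hl_tendsto)).div hG hd.ne').congr' ?_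
  filter_upwards [self_mem_nhdsWithin, hG.eventually_ne hd.ne'] with ε (hε : 0 < ε) hGε
  exact (sub_div_eq_of_orlicz_eq (fun s => update_slope_mul_sub s) hφ₁1 hε.ne'
    (hl ε hε.le).1.ne' hGε (hl ε hε.le).2).symm

/-- Scalar, pointwise form of Lemma 6.2 of the paper: with `a = u_K(x) > 0`, `b = u_L(x) ≥ 0`
and `λ(ε)` the unique positive solution of `φ₁(a/λ) + ε·φ₂(b/λ) = 1`, the left derivative
`(φ₁)'_l(1) = lim_{s→1⁻} (φ₁(1) − φ₁(s))/(1 − s)` exists and is positive, and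
`lim_{ε→0⁺} (λ(ε) − a)/ε = a·φ₂(b/a)/(φ₁)'_l(1)`. -/
theorem orlicz_combination_variation (φ₁ φ₂ : ℝ → ℝ)
    (hφ₁conv : ConvexOn ℝ (Set.Ici (0 : ℝ)) φ₁)
    (hφ₁mono : StrictMonoOn φ₁ (Set.Ici (0 : ℝ)))
    (hφ₁nonneg : ∀ s ∈ Set.Ici (0 : ℝ), 0 ≤ φ₁ s)
    (hφ₁0 : φ₁ 0 = 0) (hφ₁1 : φ₁ 1 = 1)
    (hφ₂conv : ConvexOn ℝ (Set.Ici (0 : ℝ)) φ₂)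
    (hφ₂mono : MonotoneOn φ₂ (Set.Ici (0 : ℝ)))
    (hφ₂nonneg : ∀ s ∈ Set.Ici (0 : ℝ), 0 ≤ φ₂ s)
    (hφ₂0 : φ₂ 0 = 0)
    (a b : ℝ) (ha : 0 < a) (hb : 0 ≤ b)
    (l : ℝ → ℝ)
    (hl : ∀ ε : ℝ, 0 ≤ ε → 0 < l ε ∧ φ₁ (a / l ε) + ε * φ₂ (b / l ε) = 1) :
    ∃ d : ℝ, 0 < d ∧
      Tendsto (fun s : ℝ => (φ₁ 1 - φ₁ s) / (1 - s)) (𝓝[<] (1 : ℝ)) (𝓝 d) ∧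
      Tendsto (fun ε : ℝ => (l ε - a) / ε) (𝓝[>] (0 : ℝ))
        (𝓝 (a * φ₂ (b / a) / d)) :=
  orlicz_combination_variation_general φ₁ φ₂ hφ₁conv hφ₁0 hφ₁1 hφ₂conv hφ₂mono hφ₂nonneg a b ha hb l
    hl
end

section
/- Let n ≥ 1, let K ⊆ ℝ^{n+1} be a convex body (compact convex set with nonempty interior) containing the origin in its interior, and let p ≥ n+1 be a real number. Then Vol(K) ≤ (1/p) ∫_{S^n} u_K(x)^p dσ(x) + (1/(n+1) − 1/p)·σ(S^n). Moreover, if p > n+1, equality holds if and only if K is the closed unit ball centered at the origin. (This is the instance F = σ_n^{1/n}, k = n — for which the modified quermassintegral W_F(K) equals Vol(K) — of the paper's corollary in Section 6: W_F(K) ≤ (1/p)∫_{S^n} u^p dx + (1/(k+1) − 1/p)|S^n| for p ≥ k+1, with equality if and only if K is a unit ball.) -/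
open scoped InnerProductSpace

noncomputable def supportFn {E : Type*} [NormedAddCommGroup E] [InnerProductSpace ℝ E]
    (K : Set E) (x : E) : ℝ :=
  sSup ((fun y => ⟪x, y⟫_ℝ) '' K)

noncomputable def radialFn {E : Type*} [NormedAddCommGroup E] [InnerProductSpace ℝ E]
    (K : Set E) (ξ : E) : ℝ :=
  sSup {t : ℝ | 0 ≤ t ∧ t • ξ ∈ K}

open MeasureTheory

/-!
In polar coordinates `Vol K = ∫_{S^n} ρ_K^{n+1}/(n+1) dσ`, where the radial function `ρ_K` is
bounded by the support function `u_K`. Bernoulli's inequality with exponent `p/(n+1) ≥ 1`,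
applied to `u_K^{n+1}`, gives `u_K^{n+1}/(n+1) ≤ u_K^p/p + 1/(n+1) - 1/p` pointwise, and
integrating yields the inequality. For `p > n+1` the pointwise inequality is strict unless
`u_K = 1`; both sides are continuous and `σ` charges every nonempty open set, so equality forces
`u_K ≡ 1` on the sphere. By Hahn–Banach a closed convex set is determined by its support
function, hence `K` is the unit ball.
-/

open Metric Set

section Scalar

variable {a b t : ℝ}

-- Shaped for Bernoulli's inequality `1 + q s ≤ (1 + s) ^ q` with `s = t ^ a - 1`, `q = b / a`.
lemma rpow_div_add_sub_rpow_div_eq (ha : 0 < a) (hb : 0 < b) (ht : 0 ≤ t) :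
    t ^ b / b + (1 / a - 1 / b) - t ^ a / a
      = ((1 + (t ^ a - 1)) ^ (b / a) - (1 + b / a * (t ^ a - 1))) / b := by
  rw [add_sub_cancel, ← Real.rpow_mul ht, mul_div_cancel₀ _ ha.ne']
  field_simp
  ring

lemma rpow_div_le_rpow_div_add (ha : 0 < a) (hab : a ≤ b) (ht : 0 ≤ t) :
    t ^ a / a ≤ t ^ b / b + (1 / a - 1 / b) := by
  have hb : 0 < b := ha.trans_le hab
  have hbernoulli := one_add_mul_self_le_rpow_one_add
    (by linarith [Real.rpow_nonneg ht a] : -1 ≤ t ^ a - 1) ((one_le_div ha).2 hab)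
  rw [← sub_nonneg, rpow_div_add_sub_rpow_div_eq ha hb ht]
  exact div_nonneg (sub_nonneg.2 hbernoulli) hb.le

lemma rpow_div_lt_rpow_div_add (ha : 0 < a) (hab : a < b) (ht : 0 ≤ t) (ht1 : t ≠ 1) :
    t ^ a / a < t ^ b / b + (1 / a - 1 / b) := by
  have hb : 0 < b := ha.trans hab
  have hta : t ^ a - 1 ≠ 0 := fun h =>
    ht1 (Real.rpow_left_injOn ha.ne' ht (zero_le_one (α := ℝ))
      (by simpa [sub_eq_zero] using h))
  have hbernoulli := one_add_mul_self_lt_rpow_one_add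
    (by linarith [Real.rpow_nonneg ht a] : -1 ≤ t ^ a - 1) hta ((one_lt_div ha).2 hab)
  rw [← sub_pos, rpow_div_add_sub_rpow_div_eq ha hb ht]
  exact div_pos (sub_pos.2 hbernoulli) hb

end Scalar

lemma Continuous.eq_of_le_of_integral_eq {X : Type*} [TopologicalSpace X] [MeasurableSpace X]
    [OpensMeasurableSpace X] {μ : Measure X} [μ.IsOpenPosMeasure] {f g : X → ℝ}
    (hf : Continuous f) (hg : Continuous g) (hfi : Integrable f μ) (hgi : Integrable g μ)
    (hfg : f ≤ g) (h : ∫ x, f x ∂μ = ∫ x, g x ∂μ) : f = g := by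
  by_contra hne
  obtain ⟨x, hx⟩ := Function.ne_iff.1 hne
  have := integral_pos_of_integrable_nonneg_nonzero (hg.sub hf) (hgi.sub hfi)
    (fun y => sub_nonneg.2 (hfg y)) (sub_ne_zero.2 (Ne.symm hx))
  rw [integral_sub' hgi hfi, h, sub_self] at this
  exact this.false

section SupportFn

variable {E : Type*} [NormedAddCommGroup E] [InnerProductSpace ℝ E] {K L : Set E} {x y : E}

lemma bddAbove_inner_image (hK : Bornology.IsBounded K) (x : E) :
    BddAbove ((fun y => ⟪x, y⟫_ℝ) '' K) :=
  ((innerSL ℝ x).lipschitz.isBounded_image hK).bddAbove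

lemma inner_le_supportFn (hK : Bornology.IsBounded K) (hy : y ∈ K) (x : E) :
    ⟪x, y⟫_ℝ ≤ supportFn K x :=
  le_csSup (bddAbove_inner_image hK x) ⟨y, hy, rfl⟩

lemma supportFn_le {a : ℝ} (hne : K.Nonempty) (h : ∀ y ∈ K, ⟪x, y⟫_ℝ ≤ a) :
    supportFn K x ≤ a :=
  csSup_le (hne.image _) (forall_mem_image.2 h)

lemma supportFn_nonneg (hK : Bornology.IsBounded K) (h0 : (0 : E) ∈ K) (x : E) :
    0 ≤ supportFn K x := by
  simpa using inner_le_supportFn hK h0 x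

lemma continuous_supportFn (hK : IsCompact K) : Continuous (supportFn K) :=
  hK.continuous_sSup continuous_inner

lemma continuous_supportFn_rpow_sphere (hK : IsCompact K) {p : ℝ} (hp : 0 ≤ p) :
    Continuous fun ξ : sphere (0 : E) 1 => supportFn K ξ ^ p :=
  ((continuous_supportFn hK).comp continuous_subtype_val).rpow_const fun _ => Or.inr hp

lemma supportFn_closedBall_zero_one (x : E) : supportFn (closedBall 0 1) x = ‖x‖ := by
  refine le_antisymm (supportFn_le ⟨0, mem_closedBall_self zero_le_one⟩ fun y hy => ?_) ?_
  · calc ⟪x, y⟫_ℝ ≤ ‖x‖ * ‖y‖ := real_inner_le_norm x y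
      _ ≤ ‖x‖ * 1 := by gcongr; simpa using hy
      _ = ‖x‖ := mul_one _
  · rcases eq_or_ne x 0 with rfl | hx
    · simpa using supportFn_nonneg isBounded_closedBall (mem_closedBall_self zero_le_one) 0
    · have hmem : ‖x‖⁻¹ • x ∈ closedBall (0 : E) 1 := by
        simp [norm_smul, hx]
      calc ‖x‖ = ⟪x, ‖x‖⁻¹ • x⟫_ℝ := by
            rw [real_inner_smul_right, real_inner_self_eq_norm_sq]; field_simp
        _ ≤ _ := inner_le_supportFn isBounded_closedBall hmem x

lemma exists_supportFn_lt_inner [CompleteSpace E] (hK : IsClosed K) (hconv : Convex ℝ K)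
    (hne : K.Nonempty) (hy : y ∉ K) :
    ∃ x : E, ‖x‖ = 1 ∧ supportFn K x < ⟪x, y⟫_ℝ := by
  obtain ⟨f, s, hfK, hfy⟩ := geometric_hahn_banach_closed_point hconv hK hy
  set v := (InnerProductSpace.toDual ℝ E).symm f
  have hv : ∀ z, ⟪v, z⟫_ℝ = f z := fun z => InnerProductSpace.toDual_symm_apply
  obtain ⟨z, hz⟩ := hne
  have hv0 : v ≠ 0 := by
    rintro h
    have := (hfK z hz).trans hfy
    simp [← hv, h] at this
  refine ⟨‖v‖⁻¹ • v, by simp [norm_smul, hv0], ?_⟩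
  calc supportFn K (‖v‖⁻¹ • v) ≤ ‖v‖⁻¹ * s :=
        supportFn_le ⟨z, hz⟩ fun w hw => by
          rw [real_inner_smul_left, hv]
          exact mul_le_mul_of_nonneg_left (hfK w hw).le (by positivity)
    _ < ⟪‖v‖⁻¹ • v, y⟫_ℝ := by
        rw [real_inner_smul_left, hv]; exact mul_lt_mul_of_pos_left hfy (by positivity)

lemma subset_of_supportFn_le [CompleteSpace E] (hK : IsClosed K) (hconv : Convex ℝ K)
    (hne : K.Nonempty) (hL : Bornology.IsBounded L)
    (h : ∀ x : E, ‖x‖ = 1 → supportFn L x ≤ supportFn K x) : L ⊆ K := by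
  intro y hyL
  by_contra hyK
  obtain ⟨x, hx, hlt⟩ := exists_supportFn_lt_inner hK hconv hne hyK
  exact (hlt.trans_le ((inner_le_supportFn hL hyL x).trans (h x hx))).false

lemma eq_closedBall_of_supportFn_eq_one [CompleteSpace E] (hK : IsClosed K)
    (hKb : Bornology.IsBounded K) (hconv : Convex ℝ K) (hne : K.Nonempty)
    (h : ∀ x : E, ‖x‖ = 1 → supportFn K x = 1) : K = closedBall 0 1 := by
  refine Subset.antisymm ?_ ?_
  · refine subset_of_supportFn_le isClosed_closedBall (convex_closedBall 0 1)
      ⟨0, mem_closedBall_self zero_le_one⟩ hKb fun x hx => ?_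
    rw [h x hx, supportFn_closedBall_zero_one, hx]
  · refine subset_of_supportFn_le hK hconv hne isBounded_closedBall fun x hx => ?_
    rw [h x hx, supportFn_closedBall_zero_one, hx]

end SupportFn

section RadialFn

variable {E : Type*} [NormedAddCommGroup E] [InnerProductSpace ℝ E] {K : Set E} {ξ : E}

lemma isCompact_setOf_smul_mem (hK : IsCompact K) (hξ : ξ ≠ 0) :
    IsCompact {t : ℝ | 0 ≤ t ∧ t • ξ ∈ K} :=
  ((isClosedEmbedding_smul_left hξ).isCompact_preimage hK).inter_left isClosed_Ici

lemma radialFn_nonneg_and_smul_mem (hK : IsCompact K) (h0 : (0 : E) ∈ K) (hξ : ξ ≠ 0) :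
    0 ≤ radialFn K ξ ∧ radialFn K ξ • ξ ∈ K :=
  (isCompact_setOf_smul_mem hK hξ).sSup_mem ⟨0, le_rfl, by simpa using h0⟩

lemma smul_mem_iff_le_radialFn (hK : IsCompact K) (hconv : Convex ℝ K) (h0 : (0 : E) ∈ K)
    (hξ : ξ ≠ 0) {r : ℝ} (hr : 0 ≤ r) : r • ξ ∈ K ↔ r ≤ radialFn K ξ := by
  obtain ⟨hρ0, hρK⟩ := radialFn_nonneg_and_smul_mem hK h0 hξ
  refine ⟨fun h => le_csSup (isCompact_setOf_smul_mem hK hξ).bddAbove ⟨hr, h⟩, fun h => ?_⟩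
  rcases hρ0.eq_or_lt with hρ | hρ
  · rwa [le_antisymm (h.trans hρ.ge) hr, zero_smul]
  · have := hconv.smul_mem_of_zero_mem h0 hρK ⟨div_nonneg hr hρ0, div_le_one_of_le₀ h hρ0⟩
    rwa [smul_smul, div_mul_cancel₀ _ hρ.ne'] at this

lemma radialFn_le_supportFn (hK : IsCompact K) (h0 : (0 : E) ∈ K) (hξ : ‖ξ‖ = 1) :
    radialFn K ξ ≤ supportFn K ξ := by
  have hξ0 : ξ ≠ 0 := by rintro rfl; simp at hξ
  have := inner_le_supportFn hK.isBounded (radialFn_nonneg_and_smul_mem hK h0 hξ0).2 ξ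
  rwa [real_inner_smul_right, real_inner_self_eq_norm_sq, hξ, one_pow, mul_one] at this

end RadialFn

section Polar

lemma volumeIoiPow_preimage_Iic (m : ℕ) {a : ℝ} (ha : 0 ≤ a) :
    Measure.volumeIoiPow m (Subtype.val ⁻¹' Iic a) = ENNReal.ofReal (a ^ (m + 1) / (m + 1)) := by
  rw [Measure.volumeIoiPow, withDensity_apply _ (measurableSet_Iic.preimage measurable_subtype_coe),
    setLIntegral_subtype measurableSet_Ioi _ fun r : ℝ ↦ ENNReal.ofReal (r ^ m),
    Subtype.image_preimage_coe, Ioi_inter_Iic,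
    ← ofReal_integral_eq_lintegral_ofReal (intervalIntegral.intervalIntegrable_pow _).1,
    ← intervalIntegral.integral_of_le ha]
  · simp
  · filter_upwards [ae_restrict_mem measurableSet_Ioc] with r hr
    exact pow_nonneg hr.1.le _

variable {E : Type*} [NormedAddCommGroup E] [InnerProductSpace ℝ E] [FiniteDimensional ℝ E]
  [MeasurableSpace E] [BorelSpace E] [Nontrivial E] (μ : Measure E) [μ.IsAddHaarMeasure]
  {K : Set E}

lemma measure_eq_lintegral_radialFn_pow (hK : IsCompact K) (hconv : Convex ℝ K)
    (h0 : (0 : E) ∈ K) :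
    μ K = ∫⁻ ξ : sphere (0 : E) 1,
      ENNReal.ofReal (radialFn K ξ ^ Module.finrank ℝ E / Module.finrank ℝ E)
      ∂μ.toSphere := by
  set S : Set (sphere (0 : E) 1 × Ioi (0 : ℝ)) := {q | (q.2 : ℝ) • (q.1 : E) ∈ K}
  have hS : MeasurableSet S := by
    refine hK.isClosed.measurableSet.preimage (Continuous.measurable ?_)
    fun_prop
  have hpre : homeomorphUnitSphereProd E ⁻¹' S = Subtype.val ⁻¹' K := by
    ext x
    simp [S, smul_inv_smul₀ (norm_ne_zero_iff.2 x.2)]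
  have hcomap : μ.comap (Subtype.val : ({0}ᶜ : Set E) → E) (Subtype.val ⁻¹' K) = μ K := by
    rw [comap_subtype_coe_apply (measurableSet_singleton 0).compl,
      Subtype.image_preimage_coe, inter_comm, ← sdiff_eq,
      measure_sdiff_null (measure_singleton _)]
  rw [← hcomap, ← hpre, (μ.measurePreserving_homeomorphUnitSphereProd).measure_preimage
    hS.nullMeasurableSet, Measure.prod_apply hS]
  refine lintegral_congr fun ξ => ?_
  have hξ := ne_zero_of_mem_unit_sphere ξ
  have hslice : Prod.mk ξ ⁻¹' S = Subtype.val ⁻¹' Iic (radialFn K ξ) := by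
    ext r
    exact smul_mem_iff_le_radialFn hK hconv h0 hξ r.2.out.le
  have hd : Module.finrank ℝ E - 1 + 1 = Module.finrank ℝ E :=
    Nat.sub_add_cancel Module.finrank_pos
  rw [hslice, volumeIoiPow_preimage_Iic _ (radialFn_nonneg_and_smul_mem hK h0 hξ).1,
    ← Nat.cast_add_one, hd]

lemma measureReal_le_integral_supportFn_pow (hK : IsCompact K) (hconv : Convex ℝ K)
    (h0 : (0 : E) ∈ K) :
    μ.real K ≤ ∫ ξ : sphere (0 : E) 1,
      supportFn K ξ ^ (Module.finrank ℝ E : ℝ) / Module.finrank ℝ E ∂μ.toSphere := by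
  have hcont := (continuous_supportFn_rpow_sphere hK
    (Nat.cast_nonneg (Module.finrank ℝ E))).div_const (Module.finrank ℝ E : ℝ)
  have hnonneg (ξ : sphere (0 : E) 1) :
      0 ≤ supportFn K ξ ^ (Module.finrank ℝ E : ℝ) / Module.finrank ℝ E := by
    have := supportFn_nonneg hK.isBounded h0 ξ
    positivity
  refine ENNReal.toReal_le_of_le_ofReal (integral_nonneg hnonneg) ?_
  rw [ofReal_integral_eq_lintegral_ofReal
      (hcont.integrable_of_hasCompactSupport (.of_compactSpace _)) (ae_of_all _ hnonneg),
    measure_eq_lintegral_radialFn_pow μ hK hconv h0]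
  refine lintegral_mono fun ξ => ENNReal.ofReal_le_ofReal ?_
  rw [← Real.rpow_natCast]
  gcongr
  · exact (radialFn_nonneg_and_smul_mem hK h0 (ne_zero_of_mem_unit_sphere ξ)).1
  · exact radialFn_le_supportFn hK h0 (norm_eq_of_mem_sphere ξ)

lemma measureReal_closedBall_zero_one :
    μ.real (closedBall 0 1) = μ.toSphere.real univ / Module.finrank ℝ E := by
  rw [Measure.toSphere_real_apply_univ, Measure.addHaar_real_closedBall_eq_addHaar_real_ball,
    mul_div_cancel_left₀ _ (Nat.cast_ne_zero.2 Module.finrank_pos.ne')]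

end Polar

lemma integral_supportFn_rpow_div_add {E : Type*} [NormedAddCommGroup E] [InnerProductSpace ℝ E]
    [FiniteDimensional ℝ E] [MeasurableSpace E] [BorelSpace E] (ν : Measure (sphere (0 : E) 1))
    [IsFiniteMeasure ν] {K : Set E} {p : ℝ} (hK : IsCompact K) (hp : 0 ≤ p) (c : ℝ) :
    ∫ ξ : sphere (0 : E) 1, (supportFn K ξ ^ p / p + c) ∂ν
      = 1 / p * ∫ ξ : sphere (0 : E) 1, supportFn K ξ ^ p ∂ν + c * ν.real univ := by
  rw [integral_add (((continuous_supportFn_rpow_sphere hK hp).integrable_of_hasCompactSupport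
      (.of_compactSpace _)).div_const p) (integrable_const c), integral_div, integral_const,
    smul_eq_mul]
  ring

section Inequality

variable {E : Type*} [NormedAddCommGroup E] [InnerProductSpace ℝ E] [FiniteDimensional ℝ E]
  [MeasurableSpace E] [BorelSpace E] [Nontrivial E] (μ : Measure E) [μ.IsAddHaarMeasure]
  {K : Set E} {p : ℝ}

lemma measureReal_le_integral_supportFn_rpow (hK : IsCompact K) (hconv : Convex ℝ K)
    (h0 : (0 : E) ∈ K) (hp : (Module.finrank ℝ E : ℝ) ≤ p) :
    μ.real K ≤ 1 / p * ∫ ξ : sphere (0 : E) 1, supportFn K ξ ^ p ∂μ.toSphere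
      + (1 / Module.finrank ℝ E - 1 / p) * μ.toSphere.real univ := by
  have hd : (0 : ℝ) < Module.finrank ℝ E := Nat.cast_pos.2 Module.finrank_pos
  have hu0 := supportFn_nonneg hK.isBounded h0
  rw [← integral_supportFn_rpow_div_add μ.toSphere hK (hd.trans_le hp).le]
  refine (measureReal_le_integral_supportFn_pow μ hK hconv h0).trans
    (integral_mono_of_nonneg (ae_of_all _ fun ξ => by have := hu0 ξ; positivity) ?_
      (ae_of_all _ fun ξ => rpow_div_le_rpow_div_add hd hp (hu0 ξ)))
  exact (((continuous_supportFn_rpow_sphere hK (hd.trans_le hp).le).div_const _).add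
    continuous_const).integrable_of_hasCompactSupport (.of_compactSpace _)

lemma eq_closedBall_of_measureReal_eq_integral_supportFn_rpow (hK : IsCompact K)
    (hconv : Convex ℝ K) (h0 : (0 : E) ∈ K) (hp : (Module.finrank ℝ E : ℝ) < p)
    (heq : μ.real K = 1 / p * ∫ ξ : sphere (0 : E) 1, supportFn K ξ ^ p ∂μ.toSphere
      + (1 / Module.finrank ℝ E - 1 / p) * μ.toSphere.real univ) :
    K = closedBall 0 1 := by
  have hd : (0 : ℝ) < Module.finrank ℝ E := Nat.cast_pos.2 Module.finrank_pos
  set G := fun ξ : sphere (0 : E) 1 =>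
    supportFn K ξ ^ (Module.finrank ℝ E : ℝ) / Module.finrank ℝ E
  set H := fun ξ : sphere (0 : E) 1 =>
    supportFn K ξ ^ p / p + (1 / Module.finrank ℝ E - 1 / p)
  have hGc : Continuous G := (continuous_supportFn_rpow_sphere hK hd.le).div_const _
  have hHc : Continuous H :=
    ((continuous_supportFn_rpow_sphere hK (hd.trans hp).le).div_const _).add continuous_const
  have hGi : Integrable G μ.toSphere := hGc.integrable_of_hasCompactSupport (.of_compactSpace _)
  have hHi : Integrable H μ.toSphere := hHc.integrable_of_hasCompactSupport (.of_compactSpace _)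
  have hu0 := supportFn_nonneg hK.isBounded h0
  have hGH : G ≤ H := fun ξ => rpow_div_le_rpow_div_add hd hp.le (hu0 ξ)
  have hGeqH : G = H := by
    refine hGc.eq_of_le_of_integral_eq hHc hGi hHi hGH
      (le_antisymm (integral_mono hGi hHi hGH) ?_)
    rw [integral_supportFn_rpow_div_add μ.toSphere hK (hd.trans hp).le, ← heq]
    exact measureReal_le_integral_supportFn_pow μ hK hconv h0
  refine eq_closedBall_of_supportFn_eq_one hK.isClosed hK.isBounded hconv ⟨0, h0⟩ fun x hx => ?_
  by_contra hne
  have hx' : x ∈ sphere (0 : E) 1 := by simpa using hx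
  exact (rpow_div_lt_rpow_div_add hd hp (hu0 x) hne).ne
    (congrFun hGeqH ⟨x, hx'⟩)

lemma measureReal_closedBall_eq_integral_supportFn_rpow (hp : p ≠ 0) :
    μ.real (closedBall (0 : E) 1)
      = 1 / p * ∫ ξ : sphere (0 : E) 1, supportFn (closedBall (0 : E) 1) ξ ^ p ∂μ.toSphere
        + (1 / Module.finrank ℝ E - 1 / p) * μ.toSphere.real univ := by
  simp only [supportFn_closedBall_zero_one, norm_eq_of_mem_sphere, Real.one_rpow,
    integral_const, smul_eq_mul, mul_one, measureReal_closedBall_zero_one]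
  field_simp
  ring

end Inequality

theorem vol_le_integral_supportFn_rpow_general (n : ℕ) (p : ℝ) (hp : (n : ℝ) + 1 ≤ p)
    (K : Set (EuclideanSpace ℝ (Fin (n + 1))))
    (hKcomp : IsCompact K) (hKconv : Convex ℝ K)
    (h0K : (0 : EuclideanSpace ℝ (Fin (n + 1))) ∈ interior K) :
    (volume K).toReal ≤
      (1 / p) *
        ∫ x : Metric.sphere (0 : EuclideanSpace ℝ (Fin (n + 1))) 1,
          supportFn K (x : EuclideanSpace ℝ (Fin (n + 1))) ^ p
          ∂((volume : Measure (EuclideanSpace ℝ (Fin (n + 1)))).toSphere)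
      + (1 / ((n : ℝ) + 1) - 1 / p) *
          (((volume : Measure (EuclideanSpace ℝ (Fin (n + 1)))).toSphere Set.univ).toReal) ∧
    ((n : ℝ) + 1 < p →
      ((volume K).toReal =
        (1 / p) *
          ∫ x : Metric.sphere (0 : EuclideanSpace ℝ (Fin (n + 1))) 1,
            supportFn K (x : EuclideanSpace ℝ (Fin (n + 1))) ^ p
            ∂((volume : Measure (EuclideanSpace ℝ (Fin (n + 1)))).toSphere)
        + (1 / ((n : ℝ) + 1) - 1 / p) *
            (((volume : Measure (EuclideanSpace ℝ (Fin (n + 1)))).toSphere Set.univ).toReal) ↔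
        K = Metric.closedBall (0 : EuclideanSpace ℝ (Fin (n + 1))) 1)) := by
  have hd : (Module.finrank ℝ (EuclideanSpace ℝ (Fin (n + 1))) : ℝ) = n + 1 := by simp
  have h0 : (0 : EuclideanSpace ℝ (Fin (n + 1))) ∈ K := interior_subset h0K
  refine ⟨?_, fun hp' => ⟨fun heq => ?_, ?_⟩⟩
  · simpa only [hd, measureReal_def] using
      measureReal_le_integral_supportFn_rpow volume hKcomp hKconv h0 (by rwa [hd])
  · exact eq_closedBall_of_measureReal_eq_integral_supportFn_rpow volume hKcomp hKconv h0
      (by rwa [hd]) (by rwa [hd])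
  · rintro rfl
    have hp0 : p ≠ 0 := by linarith [n.cast_nonneg (α := ℝ)]
    simpa only [hd, measureReal_def] using measureReal_closedBall_eq_integral_supportFn_rpow
      (volume : Measure (EuclideanSpace ℝ (Fin (n + 1)))) hp0

/-- The instance `F = σ_n^{1/n}`, `k = n` of the paper's Section 6 corollary: for a convex
body `K ⊆ ℝ^{n+1}` with `0 ∈ int K` and `p ≥ n+1`,
`Vol(K) ≤ (1/p) ∫_{S^n} u_K^p dσ + (1/(n+1) − 1/p)·σ(S^n)`; if `p > n+1`, equality holds
iff `K` is the closed unit ball centered at the origin. Here `σ = volume.toSphere` is the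
spherical surface measure. -/
theorem vol_le_integral_supportFn_rpow (n : ℕ) (hn : 1 ≤ n) (p : ℝ) (hp : (n : ℝ) + 1 ≤ p)
    (K : Set (EuclideanSpace ℝ (Fin (n + 1))))
    (hKcomp : IsCompact K) (hKconv : Convex ℝ K)
    (h0K : (0 : EuclideanSpace ℝ (Fin (n + 1))) ∈ interior K) :
    (volume K).toReal ≤
      (1 / p) *
        ∫ x : Metric.sphere (0 : EuclideanSpace ℝ (Fin (n + 1))) 1,
          supportFn K (x : EuclideanSpace ℝ (Fin (n + 1))) ^ p
          ∂((volume : Measure (EuclideanSpace ℝ (Fin (n + 1)))).toSphere)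
      + (1 / ((n : ℝ) + 1) - 1 / p) *
          (((volume : Measure (EuclideanSpace ℝ (Fin (n + 1)))).toSphere Set.univ).toReal) ∧
    ((n : ℝ) + 1 < p →
      ((volume K).toReal =
        (1 / p) *
          ∫ x : Metric.sphere (0 : EuclideanSpace ℝ (Fin (n + 1))) 1,
            supportFn K (x : EuclideanSpace ℝ (Fin (n + 1))) ^ p
            ∂((volume : Measure (EuclideanSpace ℝ (Fin (n + 1)))).toSphere)
        + (1 / ((n : ℝ) + 1) - 1 / p) *
            (((volume : Measure (EuclideanSpace ℝ (Fin (n + 1)))).toSphere Set.univ).toReal) ↔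
        K = Metric.closedBall (0 : EuclideanSpace ℝ (Fin (n + 1))) 1)) :=
  vol_le_integral_supportFn_rpow_general n p hp K hKcomp hKconv h0K
end
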